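/- arXiv:2203.08440 — 7 statements merged into one kernel-verified Lean document; each statement's English description precedes it below -/
import Mathlib

section
/- The quantity c₁ = sup over u ∈ (0, φ⁻¹(1/2)) of [ (1/(1+u)) / log(1 + 1/u) ] satisfies c₁ < 1. -/
open Real Set

/-- φ(u) = u·log(1 + 1/u) -/
noncomputable def phi (u : ℝ) : ℝ := u * Real.log (1 + 1 / u)

lemma log_lower {u : ℝ} (hu : 0 < u) :
    2 * (1 - Real.sqrt (u / (1 + u))) ≤ Real.log (1 + 1 / u) := by
  have h1 : (0:ℝ) < 1 + 1 / u := by positivity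
  have hs : Real.sqrt (1 + 1 / u) > 0 := Real.sqrt_pos.mpr h1
  have hlog : Real.log (1 + 1 / u) = 2 * Real.log (Real.sqrt (1 + 1 / u)) := by
    rw [Real.log_sqrt h1.le]; ring
  have hb := Real.one_sub_inv_le_log_of_pos hs
  have hinv : (Real.sqrt (1 + 1 / u))⁻¹ = Real.sqrt (u / (1 + u)) := by
    rw [← Real.sqrt_inv]
    congr 1
    field_simp
    exact add_comm 1 u
  rw [hlog]
  rw [hinv] at hb
  linarith

theorem c1_lt_one (ψ : ℝ → ℝ)
    (hψ_pos : ∀ t ∈ Set.Ioo (0 : ℝ) 1, 0 < ψ t)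
    (hψ_inv : ∀ t ∈ Set.Ioo (0 : ℝ) 1, phi (ψ t) = t) :
    sSup ((fun u : ℝ => (1 / (1 + u)) / Real.log (1 + 1 / u)) ''
      Set.Ioo 0 (ψ (1 / 2))) < 1 := by
  set U := ψ (1 / 2) with hU
  have hUpos : 0 < U := hψ_pos _ (by norm_num)
  set S := Real.sqrt (U / (1 + U)) with hS
  have hSlt : S < 1 := by
    have h : U / (1 + U) < 1 := by rw [div_lt_one (by linarith)]; linarith
    have := Real.sqrt_lt_sqrt (by positivity) h
    simpa using this
  have hSnonneg : 0 ≤ S := Real.sqrt_nonneg _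
  have key : ∀ x ∈ ((fun u : ℝ => (1 / (1 + u)) / Real.log (1 + 1 / u)) ''
      Set.Ioo 0 U), x ≤ (1 + S) / 2 := by
    rintro x ⟨u, ⟨hu0, huU⟩, rfl⟩
    have h1u : (0:ℝ) < 1 + u := by linarith
    set s := Real.sqrt (u / (1 + u)) with hs
    have hsq : s ^ 2 = u / (1 + u) := Real.sq_sqrt (by positivity)
    have hslt : s < 1 := by
      have h : u / (1 + u) < 1 := by rw [div_lt_one h1u]; linarith
      have := Real.sqrt_lt_sqrt (by positivity) h
      simpa using this
    have hsS : s ≤ S := by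
      apply Real.sqrt_le_sqrt
      rw [div_le_div_iff₀ h1u (by linarith)]
      nlinarith
    have hlogpos : 0 < Real.log (1 + 1 / u) :=
      lt_of_lt_of_le (by nlinarith [Real.sqrt_nonneg (u / (1+u))]) (log_lower hu0)
    have hbound := log_lower hu0
    have h1 : 1 / (1 + u) = 1 - u / (1 + u) := by field_simp; ring
    calc (1 / (1 + u)) / Real.log (1 + 1 / u) ≤ (1 + s) / 2 := by
          rw [div_le_iff₀ hlogpos]
          have : (1 + s) / 2 * Real.log (1 + 1 / u) ≥ (1 + s) / 2 * (2 * (1 - s)) := by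
            apply mul_le_mul_of_nonneg_left hbound (by positivity)
          nlinarith
      _ ≤ (1 + S) / 2 := by linarith
  have hne : ((fun u : ℝ => (1 / (1 + u)) / Real.log (1 + 1 / u)) ''
      Set.Ioo 0 U).Nonempty := by
    exact ⟨_, ⟨U / 2, ⟨by linarith, by linarith⟩, rfl⟩⟩
  have := csSup_le hne key
  linarith
end

section
/- The function κ*(y) = y·φ⁻¹(1/y) satisfies κ*(y)·log y → 1 as y → ∞. -/
open Real Set Filter

private lemma limL : Tendsto (fun u : ℝ => Real.log (1 + 1/u)) (nhdsWithin 0 (Set.Ioi 0)) atTop := by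
  apply Real.tendsto_log_atTop.comp
  apply tendsto_atTop_add_const_left _ 1
  exact (tendsto_inv_nhdsGT_zero (𝕜 := ℝ)).congr (fun x => (one_div x).symm)

private lemma limB : Tendsto (fun u : ℝ => Real.log u / Real.log (1 + 1/u))
    (nhdsWithin 0 (Set.Ioi 0)) (nhds (-1)) := by
  have hlog0 : Tendsto (fun u : ℝ => Real.log (1 + u)) (nhdsWithin 0 (Set.Ioi 0)) (nhds 0) := by
    have h : ContinuousAt (fun u : ℝ => Real.log (1 + u)) 0 :=
      (Real.continuousAt_log (by norm_num : (1:ℝ) + 0 ≠ 0)).comp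
        ((continuous_const.add continuous_id).continuousAt)
    have h2 : Tendsto (fun u : ℝ => Real.log (1 + u)) (nhds 0) (nhds 0) := by
      simpa using h.tendsto
    exact h2.mono_left nhdsWithin_le_nhds
  have hinv : Tendsto (fun u : ℝ => (Real.log u)⁻¹) (nhdsWithin 0 (Set.Ioi 0)) (nhds 0) := by
    have hneg : Tendsto (fun u : ℝ => -Real.log u) (nhdsWithin 0 (Set.Ioi 0)) atTop :=
      tendsto_neg_atBot_atTop.comp Real.tendsto_log_nhdsGT_zero
    have := hneg.inv_tendsto_atTop.neg
    simpa [inv_neg] using this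
  have hratio : Tendsto (fun u : ℝ => Real.log (1 + u) / Real.log u)
      (nhdsWithin 0 (Set.Ioi 0)) (nhds 0) := by
    simpa [div_eq_mul_inv] using hlog0.mul hinv
  have hmain : Tendsto (fun u : ℝ => (Real.log (1 + u) / Real.log u - 1)⁻¹)
      (nhdsWithin 0 (Set.Ioi 0)) (nhds (-1)) := by
    have h1 : Tendsto (fun u : ℝ => Real.log (1 + u) / Real.log u - 1)
        (nhdsWithin 0 (Set.Ioi 0)) (nhds (-1)) := by
      simpa using hratio.sub (tendsto_const_nhds (x := (1:ℝ)))
    have h2 := h1.inv₀ (by norm_num)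
    rw [show ((-1:ℝ))⁻¹ = -1 by norm_num] at h2
    exact h2
  refine hmain.congr' ?_
  filter_upwards [Ioo_mem_nhdsGT_of_mem (by norm_num : (0:ℝ) ∈ Set.Ico 0 1)] with u hu
  obtain ⟨hu0, hu1⟩ := hu
  have hlu : Real.log u ≠ 0 := ne_of_lt (Real.log_neg hu0 hu1)
  have hL : Real.log (1 + 1/u) = Real.log (1 + u) - Real.log u := by
    rw [show (1 : ℝ) + 1/u = (1 + u)/u by field_simp; ring,
      Real.log_div (by positivity) (ne_of_gt hu0)]
  rw [hL, show Real.log (1 + u) / Real.log u - 1 = (Real.log (1 + u) - Real.log u) / Real.log u by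
    rw [sub_div, div_self hlu], inv_div]

private lemma limG : Tendsto (fun u : ℝ =>
      -(Real.log u + Real.log (Real.log (1 + 1/u))) / Real.log (1 + 1/u))
    (nhdsWithin 0 (Set.Ioi 0)) (nhds 1) := by
  have hC : Tendsto (fun u : ℝ => Real.log (Real.log (1 + 1/u)) / Real.log (1 + 1/u))
      (nhdsWithin 0 (Set.Ioi 0)) (nhds 0) := by
    have := Real.isLittleO_log_id_atTop.tendsto_div_nhds_zero.comp limL
    simpa [Function.comp_def] using this
  have h := (limB.add hC).neg
  have h2 : Tendsto (fun u : ℝ =>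
      -(Real.log u / Real.log (1 + 1/u) + Real.log (Real.log (1 + 1/u)) / Real.log (1 + 1/u)))
      (nhdsWithin 0 (Set.Ioi 0)) (nhds 1) := by
    convert h using 2
    norm_num
  refine h2.congr (fun u => ?_)
  rw [neg_div, add_div]

theorem kappaStar_asymptotics (ψ : ℝ → ℝ)
    (hψ_pos : ∀ t ∈ Set.Ioo (0 : ℝ) 1, 0 < ψ t)
    (hψ_inv : ∀ t ∈ Set.Ioo (0 : ℝ) 1, phi (ψ t) = t) :
    Filter.Tendsto (fun y : ℝ => (y * ψ (1 / y)) * Real.log y)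
      Filter.atTop (nhds 1) := by
  have hmem : ∀ᶠ y : ℝ in atTop, (1/y) ∈ Set.Ioo (0:ℝ) 1 := by
    filter_upwards [eventually_gt_atTop (1:ℝ)] with y hy
    constructor
    · positivity
    · rw [div_lt_one (by linarith)]; linarith
  -- upper bound: ψ(1/y) ≤ 1/(y-1)
  have hub : ∀ᶠ y : ℝ in atTop, ψ (1/y) ≤ 1/(y-1) := by
    filter_upwards [hmem, eventually_gt_atTop (1:ℝ)] with y hy hy1
    set u := ψ (1/y) with hu
    have hu0 : 0 < u := hψ_pos _ hy
    have hinv : u * Real.log (1 + 1/u) = 1/y := hψ_inv _ hy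
    have hlb : 1/(u+1) ≤ Real.log (1 + 1/u) := by
      have h := Real.log_le_sub_one_of_pos (show (0:ℝ) < u/(u+1) by positivity)
      have heq : Real.log (u/(u+1)) = - Real.log (1 + 1/u) := by
        rw [show (1:ℝ) + 1/u = (u+1)/u by field_simp, Real.log_div (by positivity) (ne_of_gt hu0),
          Real.log_div (by positivity) (by positivity)]
        ring
      rw [heq] at h
      have h3 : u/(u+1) - 1 = -(1/(u+1)) := by field_simp; ring
      linarith [h3 ▸ h]
    have h2 : u/(u+1) ≤ 1/y := by
      calc u/(u+1) = u * (1/(u+1)) := by ring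
        _ ≤ u * Real.log (1 + 1/u) := by
            apply mul_le_mul_of_nonneg_left hlb (le_of_lt hu0)
        _ = 1/y := hinv
    have hy0 : (0:ℝ) < y := by linarith
    have h3 : u * y ≤ u + 1 := by
      rw [div_le_div_iff₀ (by positivity) hy0] at h2
      linarith
    rw [le_div_iff₀ (by linarith : (0:ℝ) < y - 1)]
    nlinarith
  have hupos : ∀ᶠ y : ℝ in atTop, 0 < ψ (1/y) := by
    filter_upwards [hmem] with y hy using hψ_pos _ hy
  have hu_tendsto : Tendsto (fun y : ℝ => ψ (1/y)) atTop (nhdsWithin 0 (Set.Ioi 0)) := by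
    rw [tendsto_nhdsWithin_iff]
    constructor
    · have hlim : Tendsto (fun y : ℝ => 1/(y-1)) atTop (nhds 0) := by
        have h : Tendsto (fun y : ℝ => y - 1) atTop atTop :=
          tendsto_atTop_add_const_right _ (-1) tendsto_id
        simpa [one_div, Function.comp_def] using tendsto_inv_atTop_zero.comp h
      exact tendsto_of_tendsto_of_tendsto_of_le_of_le' tendsto_const_nhds hlim
        (hupos.mono fun y hy => le_of_lt hy) hub
    · filter_upwards [hupos] with y hy using hy
  have hcomp := limG.comp hu_tendsto
  refine hcomp.congr' ?_
  filter_upwards [hmem, hupos, eventually_gt_atTop (1:ℝ)] with y hy hu0 hy1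
  set u := ψ (1/y) with hudef
  have hinv : u * Real.log (1 + 1/u) = 1/y := hψ_inv _ hy
  set L := Real.log (1 + 1/u) with hLdef
  have hL0 : 0 < L := Real.log_pos (by rw [lt_add_iff_pos_right]; positivity)
  have hy0 : (0:ℝ) < y := by linarith
  have hyeq : y = (u * L)⁻¹ := by
    rw [hinv]; field_simp
  have hlogy : Real.log y = -(Real.log u + Real.log L) := by
    rw [hyeq, Real.log_inv, Real.log_mul (ne_of_gt hu0) (ne_of_gt hL0)]
  show -(Real.log u + Real.log L) / L = (y * u) * Real.log y
  rw [hlogy, hyeq]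
  field_simp
end

section
/- For every ε ∈ (0, δ) and every λ̃₀ > 0, the Lebesgue measure of the set Ã_ε(λ̃₀) = { λ̃ > 0 : λ̃/λ̃₀ − 1 − log(λ̃/λ̃₀) < ε/δ } is strictly greater than ε·λ̃₀/δ. -/
open Real Set MeasureTheory

theorem KL_neighborhood_measure (δ ε lam0 : ℝ) (hδ : 0 < δ) (hε : 0 < ε)
    (hεδ : ε < δ) (hl : 0 < lam0) :
    ENNReal.ofReal (ε * lam0 / δ) <
      MeasureTheory.volume
        {lam : ℝ | 0 < lam ∧
          lam / lam0 - 1 - Real.log (lam / lam0) < ε / δ} := by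
  set t : ℝ := ε / δ with ht
  have ht0 : 0 < t := div_pos hε hδ
  have hexp1 : Real.exp (-t) < 1 := by
    rw [Real.exp_lt_one_iff]; linarith
  have hexp0 : 0 < Real.exp (-t) := Real.exp_pos _
  have hsub : Icc (lam0 * Real.exp (-t)) (lam0 * (1 + t)) ⊆
      {lam : ℝ | 0 < lam ∧ lam / lam0 - 1 - Real.log (lam / lam0) < t} := by
    intro lam ⟨h1, h2⟩
    have hlam0 : 0 < lam := lt_of_lt_of_le (by positivity) h1
    refine ⟨hlam0, ?_⟩
    set x : ℝ := lam / lam0 with hx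
    have hx1 : Real.exp (-t) ≤ x := by
      rw [hx, le_div_iff₀ hl]; linarith [h1]
    have hx2 : x ≤ 1 + t := by
      rw [hx, div_le_iff₀ hl]; linarith [h2]
    have hx0 : 0 < x := lt_of_lt_of_le hexp0 hx1
    rcases lt_or_ge x 1 with hc | hc
    · have hlog : -t ≤ Real.log x := by
        calc -t = Real.log (Real.exp (-t)) := (Real.log_exp _).symm
        _ ≤ Real.log x := Real.log_le_log (by positivity) hx1
      linarith
    · have hlog : 0 ≤ Real.log x := Real.log_nonneg hc
      rcases eq_or_lt_of_le hc with hc1 | hc1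
      · rw [← hc1]; simp; linarith
      · have : 0 < Real.log x := Real.log_pos hc1
        linarith
  have hle : ENNReal.ofReal (lam0 * (1 + t) - lam0 * Real.exp (-t)) ≤
      MeasureTheory.volume
        {lam : ℝ | 0 < lam ∧ lam / lam0 - 1 - Real.log (lam / lam0) < t} := by
    rw [← Real.volume_Icc]
    exact measure_mono hsub
  refine lt_of_lt_of_le ?_ hle
  rw [ENNReal.ofReal_lt_ofReal_iff (by nlinarith)]
  have : ε * lam0 / δ = lam0 * t := by rw [ht]; ring
  rw [this]; nlinarith
end

section
/- For all x > 0, the inequalities e^{−1/(12x)}/√(2π) < x^{x−1/2}/(Γ(x)·e^x) < 1/√(2π) hold; equivalently √(2π)·x^{x−1/2}e^{−x} ≤ Γ(x) ≤ √(2π)·x^{x−1/2}e^{−x}·e^{1/(12x)}. -/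
open Real

open Filter Topology

noncomputable def gS (x : ℝ) : ℝ := (x + 1/2) * Real.log (1 + 1/x) - 1

noncomputable def dS (x : ℝ) : ℝ :=
  Real.log (Real.Gamma x) - ((x - 1/2) * Real.log x - x + Real.log (Real.sqrt (2*Real.pi)))

lemma gS_hasSum {x : ℝ} (hx : 0 < x) :
    HasSum (fun k : ℕ => (1 : ℝ) / (2 * (k+1 : ℕ) + 1) * ((1/(2*x+1))^2)^(k+1)) (gS x) := by
  let f : ℕ → ℝ := fun k => (1 : ℝ) / (2 * k + 1) * ((1/(2*x+1))^2)^k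
  change HasSum (fun k => f (k + 1)) _
  rw [hasSum_nat_add_iff]
  have h2 : (2:ℝ) * x + 1 ≠ 0 := by positivity
  convert (hasSum_log_one_add_inv hx).mul_left (x + 1/2) using 1
  · rfl
  · ext k
    dsimp only [f]
    rw [← pow_mul, pow_add]
    field_simp
  · simp only [Finset.range_one, Finset.sum_singleton, f, pow_zero, mul_one, gS, one_div,
      mul_zero, zero_add]
    ring_nf

lemma gS_pos {x : ℝ} (hx : 0 < x) : 0 < gS x := by
  have h := gS_hasSum hx
  have h0 : (0:ℝ) < (1 : ℝ) / (2 * (0+1 : ℕ) + 1) * ((1/(2*x+1))^2)^(0+1) := by positivity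
  exact h0.trans_le (le_hasSum h 0 fun j _ => by positivity)

lemma gS_lt {x : ℝ} (hx : 0 < x) : gS x < 1/(12*x) - 1/(12*(x+1)) := by
  set t : ℝ := 1/(2*x+1) with ht
  have htpos : 0 < t := by positivity
  have ht1 : t^2 < 1 := by
    rw [ht, div_pow, div_lt_one (by positivity)]
    nlinarith
  have hgeo : HasSum (fun k : ℕ => (1/3 : ℝ) * (t^2)^(k+1)) ((1/3) * (t^2 / (1 - t^2))) := by
    have := (hasSum_geometric_of_lt_one (sq_nonneg t) ht1).mul_left (t^2)
    simp_rw [← _root_.pow_succ'] at this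
    exact this.mul_left (1/3)
  have hlt : gS x < (1/3) * (t^2 / (1 - t^2)) := by
    refine hasSum_lt (i := 1) (fun k => ?_) ?_ (gS_hasSum hx) hgeo
    · have : (1:ℝ) / (2 * (k+1 : ℕ) + 1) ≤ 1/3 := by
        apply div_le_div_of_nonneg_left one_pos.le (by norm_num)
        push_cast; linarith [Nat.cast_nonneg (α := ℝ) k]
      exact mul_le_mul_of_nonneg_right this (by positivity)
    · have : (1:ℝ) / (2 * (1+1 : ℕ) + 1) < 1/3 := by norm_num
      exact mul_lt_mul_of_pos_right this (by positivity)
  refine hlt.trans_le (le_of_eq ?_)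
  rw [ht]
  have hx1 : x + 1 ≠ 0 := by positivity
  have h2x : (2:ℝ)*x+1 ≠ 0 := by positivity
  field_simp
  ring_nf
  have hne : x*12 + x^2*12 ≠ 0 := by positivity
  field_simp
  ring

lemma dS_step {x : ℝ} (hx : 0 < x) : dS x - dS (x+1) = gS x := by
  have hΓ : (0:ℝ) < Real.Gamma x := Real.Gamma_pos_of_pos hx
  have h1 : Real.log (Real.Gamma (x+1)) = Real.log x + Real.log (Real.Gamma x) := by
    rw [Real.Gamma_add_one hx.ne', Real.log_mul hx.ne' hΓ.ne']
  have h2 : Real.log (1 + 1/x) = Real.log (x+1) - Real.log x := by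
    rw [show (1:ℝ) + 1/x = (x+1)/x by field_simp, Real.log_div (by positivity) hx.ne']
  simp only [dS, gS, h1, h2]
  ring

lemma dS_partial {x : ℝ} (hx : 0 < x) (N : ℕ) :
    ∑ n ∈ Finset.range N, gS (x + n) = dS x - dS (x + N) := by
  induction N with
  | zero => simp
  | succ n ih =>
    rw [Finset.sum_range_succ, ih, ← dS_step (by positivity : (0:ℝ) < x + n)]
    push_cast
    ring_nf

lemma logGamma_add_nat {x : ℝ} (hx : 0 < x) (N : ℕ) :
    Real.log (Real.Gamma (x + N)) =
      Real.log (Real.Gamma x) + ∑ j ∈ Finset.range N, Real.log (x + j) := by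
  induction N with
  | zero => simp
  | succ n ih =>
    have hxn : (0:ℝ) < x + n := by positivity
    have : x + (n+1 : ℕ) = (x + n) + 1 := by push_cast; ring
    rw [this, Real.Gamma_add_one hxn.ne',
      Real.log_mul hxn.ne' (Real.Gamma_pos_of_pos hxn).ne', Finset.sum_range_succ, ih]
    ring

lemma dS_tendsto {x : ℝ} (hx : 0 < x) :
    Tendsto (fun N : ℕ => dS (x + N)) atTop (𝓝 0) := by
  set A : ℕ → ℝ := fun N =>
    x * Real.log N + Real.log (Nat.factorial N) -
      ∑ j ∈ Finset.range (N+1), Real.log (x + j) with hA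
  set S : ℕ → ℝ := fun N => Real.log (Stirling.stirlingSeq N) with hS
  set T : ℕ → ℝ := fun N => (x + N + 1/2) * Real.log (1 + x / N) with hT
  have hΓpos : (0:ℝ) < Real.Gamma x := Real.Gamma_pos_of_pos hx
  -- A tends to log Γ x
  have hAlim : Tendsto A atTop (𝓝 (Real.log (Real.Gamma x))) := by
    have h1 : Tendsto (fun N => Real.log (Real.GammaSeq x N)) atTop
        (𝓝 (Real.log (Real.Gamma x))) :=
      ((Real.continuousAt_log hΓpos.ne').tendsto).comp (Real.GammaSeq_tendsto_Gamma x)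
    refine h1.congr' ?_
    filter_upwards [eventually_ge_atTop 1] with N hN
    have hN0 : (0:ℝ) < N := by exact_mod_cast hN
    have hprod : (0:ℝ) < ∏ j ∈ Finset.range (N+1), (x + j) :=
      Finset.prod_pos fun j _ => by positivity
    rw [Real.GammaSeq, Real.log_div (by positivity) hprod.ne',
      Real.log_mul (by positivity) (by exact_mod_cast (Nat.factorial_pos N).ne'),
      Real.log_rpow hN0,
      Real.log_prod (fun j _ => by positivity)]
  -- S tends to log √π
  have hSlim : Tendsto S atTop (𝓝 (Real.log (Real.sqrt Real.pi))) :=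
    ((Real.continuousAt_log (Real.sqrt_pos.2 Real.pi_pos).ne').tendsto).comp
      Stirling.tendsto_stirlingSeq_sqrt_pi
  -- T tends to x
  have hTlim : Tendsto T atTop (𝓝 x) := by
    have h1 : Tendsto (fun N : ℕ => (N:ℝ) * Real.log (1 + x / N)) atTop (𝓝 x) :=
      (tendsto_mul_log_one_add_div_atTop x).comp tendsto_natCast_atTop_atTop
    have h2 : Tendsto (fun N : ℕ => Real.log (1 + x / N)) atTop (𝓝 0) := by
      have hbase : Tendsto (fun N : ℕ => 1 + x / N) atTop (𝓝 1) := by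
        have := tendsto_const_nhds (x := (1:ℝ)) (f := atTop (α := ℕ))
        simpa using this.add ((tendsto_const_nhds (x := x)).div_atTop
          tendsto_natCast_atTop_atTop)
      have := ((Real.continuousAt_log one_ne_zero).tendsto).comp hbase
      rw [Real.log_one] at this
      exact this
    have h3 : Tendsto (fun N : ℕ => (x + 1/2) * Real.log (1 + x / N)) atTop (𝓝 0) := by
      simpa using h2.const_mul (x + 1/2)
    have := h1.add h3
    rw [add_zero] at this
    refine this.congr fun N => ?_
    simp only [hT]; ring
  -- combine
  have key : ∀ᶠ N : ℕ in atTop, dS (x + N) =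
      (Real.log (Real.Gamma x) - A N) + (S N - Real.log (Real.sqrt Real.pi)) + (x - T N) := by
    filter_upwards [eventually_ge_atTop 1] with N hN
    have hN0 : (0:ℝ) < N := by exact_mod_cast hN
    have hxN : (0:ℝ) < x + N := by positivity
    have hlog1 : Real.log (1 + x / N) = Real.log (x + N) - Real.log N := by
      rw [show (1:ℝ) + x / N = (x + N) / N by field_simp; ring, Real.log_div hxN.ne' hN0.ne']
    have hlogfac : Real.log (Nat.factorial N) =
        Real.log (Stirling.stirlingSeq N) + (1/2) * Real.log (2*N) + N * (Real.log N - 1) := by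
      have h := Stirling.log_stirlingSeq_formula N
      rw [h, Real.log_div hN0.ne' (Real.exp_ne_zero 1), Real.log_exp]
      push_cast
      ring
    have hlog2N : Real.log (2*(N:ℝ)) = Real.log 2 + Real.log N :=
      Real.log_mul two_ne_zero hN0.ne'
    have hlogsqrt2pi : Real.log (Real.sqrt (2*Real.pi)) =
        (1/2) * Real.log 2 + (1/2) * Real.log Real.pi := by
      rw [show Real.sqrt (2*Real.pi) = Real.sqrt 2 * Real.sqrt Real.pi from
          Real.sqrt_mul (by norm_num) _,
        Real.log_mul (by positivity) (by positivity),
        Real.log_sqrt (by norm_num), Real.log_sqrt Real.pi_pos.le]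
      ring
    have hlogsqrtpi : Real.log (Real.sqrt Real.pi) = Real.log Real.pi / 2 :=
      Real.log_sqrt Real.pi_pos.le
    rw [dS, logGamma_add_nat hx N]
    simp only [hA, hS, hT, hlog1, Finset.sum_range_succ, hlogfac, hlog2N, hlogsqrt2pi,
      hlogsqrtpi]
    push_cast
    ring
  have hlim : Tendsto (fun N : ℕ => (Real.log (Real.Gamma x) - A N) +
      (S N - Real.log (Real.sqrt Real.pi)) + (x - T N)) atTop (𝓝 0) := by
    have h := ((hAlim.const_sub (Real.log (Real.Gamma x))).add
      (hSlim.sub_const (Real.log (Real.sqrt Real.pi)))).add (hTlim.const_sub x)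
    simpa using h
  exact hlim.congr' (EventuallyEq.symm key)

lemma bS_hasSum {x : ℝ} (hx : 0 < x) :
    HasSum (fun n : ℕ => 1/(12*(x+n)) - 1/(12*(x+n+1))) (1/(12*x)) := by
  set f : ℕ → ℝ := fun m => 1/(12*(x+m)) with hf
  have hfe : ∀ n : ℕ, (1:ℝ)/(12*(x+n)) - 1/(12*(x+n+1)) = f n - f (n+1) := by
    intro n; simp only [hf]; push_cast; ring_nf
  have hfnn : ∀ n : ℕ, 0 ≤ f n := fun n => by positivity
  have hnn : ∀ n : ℕ, 0 ≤ f n - f (n+1) := by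
    intro n
    simp only [hf]
    rw [sub_nonneg]
    apply div_le_div_of_nonneg_left one_pos.le (by positivity)
    push_cast; linarith
  have hpart : ∀ N : ℕ, ∑ n ∈ Finset.range N, (f n - f (n+1)) = f 0 - f N :=
    fun N => Finset.sum_range_sub' f N
  have h0 : Tendsto f atTop (𝓝 0) := by
    apply Tendsto.div_atTop tendsto_const_nhds
    apply Tendsto.const_mul_atTop (by norm_num : (0:ℝ) < 12)
    exact tendsto_atTop_add_const_left atTop x tendsto_natCast_atTop_atTop
  have hsum : Summable (fun n : ℕ => f n - f (n+1)) := by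
    apply summable_of_sum_range_le hnn (c := f 0)
    intro N
    rw [hpart]
    linarith [hfnn N]
  simp_rw [hfe]
  rw [Summable.hasSum_iff_tendsto_nat hsum]
  have : Tendsto (fun N : ℕ => f 0 - f N) atTop (𝓝 (f 0 - 0)) := tendsto_const_nhds.sub h0
  simp_rw [hpart]
  simpa [hf] using this

lemma dS_hasSum {x : ℝ} (hx : 0 < x) : HasSum (fun n : ℕ => gS (x + n)) (dS x) := by
  have hgb : ∀ n : ℕ, gS (x + n) ≤ 1/(12*(x+n)) - 1/(12*(x+n+1)) := by
    intro n
    have := gS_lt (x := x + n) (by positivity)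
    push_cast at this ⊢
    linarith
  have hnn : ∀ n : ℕ, 0 ≤ gS (x + n) := fun n => (gS_pos (by positivity)).le
  have hsummable : Summable (fun n : ℕ => gS (x + n)) := by
    apply summable_of_sum_range_le hnn (c := 1/(12*x))
    intro N
    calc ∑ n ∈ Finset.range N, gS (x + n)
        ≤ ∑ n ∈ Finset.range N, (1/(12*(x+n)) - 1/(12*(x+n+1))) :=
          Finset.sum_le_sum fun n _ => hgb n
      _ ≤ 1/(12*x) := sum_le_hasSum _ (fun n _ => by
          have h1 : (0:ℝ) < x + n := by positivity
          rw [sub_nonneg]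
          apply div_le_div_of_nonneg_left one_pos.le (by positivity)
          linarith) (bS_hasSum hx)
  rw [Summable.hasSum_iff_tendsto_nat hsummable]
  have h0 : Tendsto (fun N : ℕ => dS (x + N)) atTop (𝓝 0) := dS_tendsto hx
  have : Tendsto (fun N : ℕ => dS x - dS (x + N)) atTop (𝓝 (dS x - 0)) :=
    tendsto_const_nhds.sub h0
  simp_rw [dS_partial hx]
  simpa using this

lemma dS_pos {x : ℝ} (hx : 0 < x) : 0 < dS x := by
  have h := dS_hasSum hx
  have h0 : 0 < gS (x + (0:ℕ)) := gS_pos (by positivity)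
  exact h0.trans_le (le_hasSum h 0 fun j _ => (gS_pos (by positivity)).le)

lemma dS_lt {x : ℝ} (hx : 0 < x) : dS x < 1/(12*x) := by
  refine hasSum_lt (i := 0) (fun n => ?_) ?_ (dS_hasSum hx) (bS_hasSum hx)
  · have := gS_lt (x := x + n) (by positivity)
    push_cast at this ⊢
    linarith
  · have := gS_lt (x := x + (0:ℕ)) (by positivity)
    push_cast at this ⊢
    linarith

theorem stirling_two_sided (x : ℝ) (hx : 0 < x) :
    (Real.exp (-1 / (12 * x)) / Real.sqrt (2 * Real.pi) <
        x ^ (x - 1 / 2) / (Real.Gamma x * Real.exp x) ∧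
      x ^ (x - 1 / 2) / (Real.Gamma x * Real.exp x) < 1 / Real.sqrt (2 * Real.pi)) ∧
    (Real.sqrt (2 * Real.pi) * x ^ (x - 1 / 2) * Real.exp (-x) ≤ Real.Gamma x ∧
      Real.Gamma x ≤
        Real.sqrt (2 * Real.pi) * x ^ (x - 1 / 2) * Real.exp (-x) *
          Real.exp (1 / (12 * x))) := by
  have hΓ : 0 < Real.Gamma x := Real.Gamma_pos_of_pos hx
  have hs : 0 < Real.sqrt (2 * Real.pi) := Real.sqrt_pos.2 (by positivity)
  have hd1 : 0 < Real.log (Real.Gamma x) -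
      ((x - 1/2) * Real.log x - x + Real.log (Real.sqrt (2*Real.pi))) := dS_pos hx
  have hd2 : Real.log (Real.Gamma x) -
      ((x - 1/2) * Real.log x - x + Real.log (Real.sqrt (2*Real.pi))) < 1/(12*x) :=
    dS_lt hx
  have hneg : (-1 : ℝ) / (12*x) = -(1/(12*x)) := by ring
  have hrw1 : Real.Gamma x = Real.exp (Real.log (Real.Gamma x)) := (Real.exp_log hΓ).symm
  have hrw2 : Real.sqrt (2*Real.pi) = Real.exp (Real.log (Real.sqrt (2*Real.pi))) :=
    (Real.exp_log hs).symm
  have hrw3 : x ^ (x - 1/2) = Real.exp ((x - 1/2) * Real.log x) := by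
    rw [Real.rpow_def_of_pos hx, mul_comm]
  refine ⟨⟨?_, ?_⟩, ?_, ?_⟩
  · rw [hrw1, hrw2, hrw3, ← Real.exp_add, ← Real.exp_sub, ← Real.exp_sub,
      Real.exp_lt_exp]
    rw [hneg]
    linarith
  · rw [hrw1, hrw2, hrw3, ← Real.exp_add, ← Real.exp_sub,
      lt_div_iff₀ (Real.exp_pos _), ← Real.exp_add, Real.exp_lt_one_iff]
    linarith
  · rw [hrw1, hrw2, hrw3, ← Real.exp_add, ← Real.exp_add, Real.exp_le_exp]
    linarith
  · rw [hrw1, hrw2, hrw3, ← Real.exp_add, ← Real.exp_add, ← Real.exp_add, Real.exp_le_exp]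
    linarith
end

section
/- For all u > 0 and a, b ∈ (0,1) with b < 1 (and a > 0), the inverse rescaled beta density satisfies B(b,a)·IRB(u) = ∫_{(0,∞)³} [s^{−b}/Γ(1−b)]·[w^{b+a−1}/Γ(b+a)]·e^{−w}·[z^{s+w}/Γ(s+w+1)]·e^{−z}·u^{s+w−1}·e^{−zu} d(s,w,z), where IRB(u) = (1/B(b,a))·[1/(u(1+u))]·[log(1+1/u)]^{b−1}/[1+log(1+1/u)]^{b+a}. -/
open Real Set MeasureTheory

/-- The beta function B(b,a) = Γ(b)Γ(a)/Γ(b+a). -/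
noncomputable def betaFn (b a : ℝ) : ℝ :=
  Real.Gamma b * Real.Gamma a / Real.Gamma (b + a)

/-- The inverse rescaled beta density. -/
noncomputable def IRB (b a u : ℝ) : ℝ :=
  (1 / betaFn b a) * (1 / (u * (1 + u))) *
    (Real.log (1 + 1 / u)) ^ (b - 1) / (1 + Real.log (1 + 1 / u)) ^ (b + a)

theorem IRB_integral_rep (a b u : ℝ) (ha : 0 < a) (hb : 0 < b) (hb1 : b < 1)
    (hu : 0 < u) :
    betaFn b a * IRB b a u =
      ∫ s in Set.Ioi (0 : ℝ), ∫ w in Set.Ioi (0 : ℝ), ∫ z in Set.Ioi (0 : ℝ),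
        (s ^ (-b) / Real.Gamma (1 - b)) *
          (w ^ (b + a - 1) / Real.Gamma (b + a)) * Real.exp (-w) *
          (z ^ (s + w) / Real.Gamma (s + w + 1)) * Real.exp (-z) *
          u ^ (s + w - 1) * Real.exp (-z * u) := by
  have hu1 : (0:ℝ) < 1 + u := by linarith
  set L : ℝ := Real.log (1 + 1 / u) with hLdef
  have hL : 0 < L := Real.log_pos (by have := one_div_pos.2 hu; linarith)
  have hL1 : (0:ℝ) < 1 + L := by linarith
  have hba : (0:ℝ) < b + a := by linarith
  have hGba : Real.Gamma (b + a) ≠ 0 := (Real.Gamma_pos_of_pos hba).ne'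
  have h1b : (0:ℝ) < 1 - b := by linarith
  have hG1b : Real.Gamma (1 - b) ≠ 0 := (Real.Gamma_pos_of_pos h1b).ne'
  have hlogdiv : Real.log (u / (1 + u)) = -L := by
    have h' : (1:ℝ) + 1 / u = (1 + u) / u := by
      field_simp
      ring
    rw [hLdef, h', ← Real.log_inv, inv_div]
  -- step 1 : the innermost integral
  have key1 : ∀ s w : ℝ, 0 < s → 0 < w →
      (∫ z in Set.Ioi (0 : ℝ),
        (s ^ (-b) / Real.Gamma (1 - b)) *
          (w ^ (b + a - 1) / Real.Gamma (b + a)) * Real.exp (-w) *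
          (z ^ (s + w) / Real.Gamma (s + w + 1)) * Real.exp (-z) *
          u ^ (s + w - 1) * Real.exp (-z * u)) =
      (s ^ (-b) / Real.Gamma (1 - b)) *
          (w ^ (b + a - 1) / Real.Gamma (b + a)) * Real.exp (-w) *
          u ^ (s + w - 1) * (1 / (1 + u)) ^ (s + w + 1) := by
    intro s w hs hw
    have hsw : (0:ℝ) < s + w + 1 := by linarith
    have hG : Real.Gamma (s + w + 1) ≠ 0 := (Real.Gamma_pos_of_pos hsw).ne'
    have hpt : ∀ z : ℝ,
        (s ^ (-b) / Real.Gamma (1 - b)) *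
          (w ^ (b + a - 1) / Real.Gamma (b + a)) * Real.exp (-w) *
          (z ^ (s + w) / Real.Gamma (s + w + 1)) * Real.exp (-z) *
          u ^ (s + w - 1) * Real.exp (-z * u) =
        ((s ^ (-b) / Real.Gamma (1 - b)) *
          (w ^ (b + a - 1) / Real.Gamma (b + a)) * Real.exp (-w) *
          u ^ (s + w - 1) / Real.Gamma (s + w + 1)) *
          (z ^ (s + w + 1 - 1) * Real.exp (-((1 + u) * z))) := by
      intro z
      have e : Real.exp (-z) * Real.exp (-z * u) = Real.exp (-((1 + u) * z)) := by
        rw [← Real.exp_add]; congr 1; ring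
      rw [show s + w + 1 - 1 = s + w by ring, ← e]
      field_simp
    rw [MeasureTheory.setIntegral_congr_fun measurableSet_Ioi (fun z _ => hpt z),
      MeasureTheory.integral_const_mul,
      Real.integral_rpow_mul_exp_neg_mul_Ioi hsw hu1]
    field_simp
  -- step 2 : the middle integral
  have key2 : ∀ s : ℝ, 0 < s →
      (∫ w in Set.Ioi (0 : ℝ),
        (s ^ (-b) / Real.Gamma (1 - b)) *
          (w ^ (b + a - 1) / Real.Gamma (b + a)) * Real.exp (-w) *
          u ^ (s + w - 1) * (1 / (1 + u)) ^ (s + w + 1)) =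
      (s ^ (-b) / Real.Gamma (1 - b)) * u ^ (s - 1) * (1 / (1 + u)) ^ (s + 1) *
        (1 / (1 + L)) ^ (b + a) := by
    intro s hs
    have hpt : ∀ w : ℝ,
        (s ^ (-b) / Real.Gamma (1 - b)) *
          (w ^ (b + a - 1) / Real.Gamma (b + a)) * Real.exp (-w) *
          u ^ (s + w - 1) * (1 / (1 + u)) ^ (s + w + 1) =
        ((s ^ (-b) / Real.Gamma (1 - b)) * u ^ (s - 1) * (1 / (1 + u)) ^ (s + 1) /
          Real.Gamma (b + a)) * (w ^ (b + a - 1) * Real.exp (-((1 + L) * w))) := by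
      intro w
      have e1 : u ^ (s + w - 1) = u ^ (s - 1) * u ^ w := by
        rw [← Real.rpow_add hu]; ring_nf
      have e2 : (1 / (1 + u)) ^ (s + w + 1) =
          (1 / (1 + u)) ^ (s + 1) * (1 / (1 + u)) ^ w := by
        rw [← Real.rpow_add (by positivity)]; ring_nf
      have e3 : u ^ w * (1 / (1 + u)) ^ w = Real.exp (-(L * w)) := by
        rw [← Real.mul_rpow hu.le (by positivity), mul_one_div,
          Real.rpow_def_of_pos (by positivity), hlogdiv]
        ring_nf
      have e4 : Real.exp (-((1 + L) * w)) = Real.exp (-w) * Real.exp (-(L * w)) := by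
        rw [← Real.exp_add]; congr 1; ring
      rw [e1, e2, e4, ← e3]
      field_simp
    rw [MeasureTheory.setIntegral_congr_fun measurableSet_Ioi (fun w _ => hpt w),
      MeasureTheory.integral_const_mul,
      Real.integral_rpow_mul_exp_neg_mul_Ioi hba hL1]
    field_simp
  -- step 3 : the outer integral
  have hpt3 : ∀ s : ℝ,
      (s ^ (-b) / Real.Gamma (1 - b)) * u ^ (s - 1) * (1 / (1 + u)) ^ (s + 1) *
        (1 / (1 + L)) ^ (b + a) =
      ((1 / (u * (1 + u))) * (1 / (1 + L)) ^ (b + a) / Real.Gamma (1 - b)) *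
        (s ^ (1 - b - 1) * Real.exp (-(L * s))) := by
    intro s
    have e1 : u ^ (s - 1) = u ^ s / u := by
      rw [Real.rpow_sub hu, Real.rpow_one]
    have e2 : (1 / (1 + u)) ^ (s + 1) = (1 / (1 + u)) ^ s * (1 / (1 + u)) := by
      rw [Real.rpow_add (by positivity), Real.rpow_one]
    have e3 : u ^ s * (1 / (1 + u)) ^ s = Real.exp (-(L * s)) := by
      rw [← Real.mul_rpow hu.le (by positivity), mul_one_div,
        Real.rpow_def_of_pos (by positivity), hlogdiv]
      ring_nf
    rw [show (1:ℝ) - b - 1 = -b by ring, e1, e2, ← e3]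
    field_simp
  have keyfin :
      (∫ s in Set.Ioi (0 : ℝ),
        (s ^ (-b) / Real.Gamma (1 - b)) * u ^ (s - 1) * (1 / (1 + u)) ^ (s + 1) *
          (1 / (1 + L)) ^ (b + a)) =
      (1 / (u * (1 + u))) * (1 / (1 + L)) ^ (b + a) * (1 / L) ^ (1 - b) := by
    rw [MeasureTheory.setIntegral_congr_fun measurableSet_Ioi (fun s _ => hpt3 s),
      MeasureTheory.integral_const_mul,
      Real.integral_rpow_mul_exp_neg_mul_Ioi h1b hL]
    field_simp
  calc betaFn b a * IRB b a u
      = (1 / (u * (1 + u))) * (1 / (1 + L)) ^ (b + a) * (1 / L) ^ (1 - b) := by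
        have hbeta : betaFn b a ≠ 0 := by
          unfold betaFn
          positivity
        have hp1 : (0:ℝ) < (1 + L) ^ (b + a) := Real.rpow_pos_of_pos hL1 _
        have hpow1 : (1 / (1 + L)) ^ (b + a) = ((1 + L) ^ (b + a))⁻¹ := by
          rw [one_div, Real.inv_rpow hL1.le]
        have hpow2 : (1 / L) ^ (1 - b) = L ^ (b - 1) := by
          rw [one_div, Real.inv_rpow hL.le, ← Real.rpow_neg hL.le]
          congr 1; ring
        rw [IRB, ← hLdef, hpow1, hpow2]
        field_simp [hbeta]
    _ = ∫ s in Set.Ioi (0 : ℝ), ∫ w in Set.Ioi (0 : ℝ), ∫ z in Set.Ioi (0 : ℝ),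
        (s ^ (-b) / Real.Gamma (1 - b)) *
          (w ^ (b + a - 1) / Real.Gamma (b + a)) * Real.exp (-w) *
          (z ^ (s + w) / Real.Gamma (s + w + 1)) * Real.exp (-z) *
          u ^ (s + w - 1) * Real.exp (-z * u) := by
        rw [← keyfin]
        refine MeasureTheory.setIntegral_congr_fun measurableSet_Ioi (fun s hs => ?_)
        rw [← key2 s hs]
        exact MeasureTheory.setIntegral_congr_fun measurableSet_Ioi
          (fun w hw => (key1 s w hs hw).symm)
end

section
/- If 1 < v < y/2 and y > 1, then φ⁻¹(v/y)/φ⁻¹(1/y) ≤ v^{c₂}, where c₂ = sup over u ∈ (0, φ⁻¹(1/2)) of log(1+1/u)/[log(1+1/u) − 1/(1+u)], and c₂ is finite. -/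
open Real Set

lemma ne_one' {u : ℝ} (hu : 0 < u) : (1 + 1 / u : ℝ) ≠ 1 := by
  have : (0:ℝ) < 1/u := by positivity
  intro h; linarith

lemma log_lt_inv' {u : ℝ} (hu : 0 < u) : Real.log (1 + 1 / u) < 1 / u := by
  have h := Real.log_lt_sub_one_of_pos (x := 1 + 1/u) (by positivity) (ne_one' hu)
  linarith

lemma inv_lt_log' {u : ℝ} (hu : 0 < u) : 1 / (1 + u) < Real.log (1 + 1 / u) := by
  have h1u : (0:ℝ) < 1 + u := by linarith
  have hne : ((1 + 1/u : ℝ))⁻¹ ≠ 1 := by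
    simp only [ne_eq, inv_eq_one]; exact ne_one' hu
  have h := Real.log_lt_sub_one_of_pos (x := (1 + 1/u)⁻¹) (by positivity) hne
  rw [Real.log_inv] at h
  have he : (1 + 1/u)⁻¹ = 1 - 1 / (1 + u) := by rw [eq_sub_iff_add_eq]; field_simp; ring
  rw [he] at h
  linarith

lemma hasDerivAt_logaux {u : ℝ} (hu : 0 < u) :
    HasDerivAt (fun u : ℝ => Real.log (1 + 1/u)) (-(1 / (u * (1 + u)))) u := by
  have h1 : HasDerivAt (fun u : ℝ => 1 + 1/u) (-(u^2)⁻¹) u := by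
    simpa [one_div] using ((hasDerivAt_inv (ne_of_gt hu)).const_add 1)
  have h2 := (Real.hasDerivAt_log (x := 1 + 1/u) (by positivity)).comp u h1
  refine h2.congr_deriv ?_
  field_simp
  ring

lemma phi_hasDerivAt {u : ℝ} (hu : 0 < u) :
    HasDerivAt phi (Real.log (1 + 1/u) - 1/(1+u)) u := by
  have h := (hasDerivAt_id u).mul (hasDerivAt_logaux hu)
  have : HasDerivAt (fun u : ℝ => u * Real.log (1 + 1/u))
      (1 * Real.log (1 + 1/u) + u * -(1 / (u * (1 + u)))) u := h
  refine this.congr_deriv ?_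
  field_simp
  ring

lemma phi_deriv_pos {u : ℝ} (hu : 0 < u) :
    0 < Real.log (1 + 1/u) - 1/(1+u) := by
  have := inv_lt_log' hu; linarith

lemma phi_strictMonoOn : StrictMonoOn phi (Ioi 0) := by
  apply strictMonoOn_of_deriv_pos (convex_Ioi 0)
  · exact fun x hx => (phi_hasDerivAt hx).differentiableAt.continuousAt.continuousWithinAt
  · intro x hx
    rw [interior_Ioi] at hx
    rw [(phi_hasDerivAt hx).deriv]
    exact phi_deriv_pos hx

lemma F_strictAntiOn : StrictAntiOn (fun u : ℝ => (1+u) * Real.log (1 + 1/u)) (Ioi 0) := by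
  apply strictAntiOn_of_deriv_neg (convex_Ioi 0)
  · intro x hx
    exact (((hasDerivAt_id x).const_add 1).mul
      (hasDerivAt_logaux hx)).differentiableAt.continuousAt.continuousWithinAt
  · intro x hx
    rw [interior_Ioi] at hx
    have h := ((hasDerivAt_id x).const_add 1).mul (hasDerivAt_logaux hx)
    have h2 : HasDerivAt (fun u : ℝ => (1+u) * Real.log (1 + 1/u))
        (Real.log (1 + 1/x) - 1/x) x := by
      have hx0 : x ≠ 0 := ne_of_gt hx
      have h1x : (1:ℝ) + x ≠ 0 := ne_of_gt (by have : (0:ℝ) < x := hx; linarith)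
      refine h.congr_deriv ?_
      simp only [id]
      field_simp
      ring
    rw [h2.deriv]
    have := log_lt_inv' hx
    linarith

lemma phi_mem_Ioo {u : ℝ} (hu : 0 < u) : phi u ∈ Ioo (0:ℝ) 1 := by
  constructor
  · have h := inv_lt_log' hu
    have : (0:ℝ) < 1/(1+u) := by positivity
    have hlog : 0 < Real.log (1 + 1/u) := by linarith
    exact mul_pos hu hlog
  · have h := log_lt_inv' hu
    have : phi u < u * (1/u) := by
      exact mul_lt_mul_of_pos_left h hu
    rwa [mul_one_div, div_self (ne_of_gt hu)] at this

lemma aux_ineq {a L g c : ℝ} (ha : 0 < a) (hL : 0 < L) (hg : 0 < g) (h : L ≤ c * g) :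
    0 ≤ c * (a * L)⁻¹ - a⁻¹ * g⁻¹ := by
  have ha' := ne_of_gt ha
  have hL' := ne_of_gt hL
  have hg' := ne_of_gt hg
  have e : c * (a*L)⁻¹ - a⁻¹ * g⁻¹ = (c*g - L)/(a*L*g) := by
    field_simp
  rw [e]
  exact div_nonneg (by linarith) (by positivity)

lemma ratio_mono {u U : ℝ} (hu : 0 < u) (hU : u < U) :
    Real.log (1 + 1/u) / (Real.log (1 + 1/u) - 1/(1+u)) ≤
    Real.log (1 + 1/U) / (Real.log (1 + 1/U) - 1/(1+U)) := by
  have hU0 : 0 < U := hu.trans hU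
  have h1u : (0:ℝ) < 1 + u := by linarith
  have h1U : (0:ℝ) < 1 + U := by linarith
  have hgu := phi_deriv_pos hu
  have hgU := phi_deriv_pos hU0
  have hF : (1+U) * Real.log (1 + 1/U) < (1+u) * Real.log (1 + 1/u) :=
    F_strictAntiOn (mem_Ioi.2 hu) (mem_Ioi.2 hU0) hU
  have hFU1 : 1 < (1+U) * Real.log (1 + 1/U) := by
    have h := inv_lt_log' hU0
    calc (1:ℝ) = (1+U) * (1/(1+U)) := by field_simp
    _ < (1+U) * Real.log (1 + 1/U) := mul_lt_mul_of_pos_left h h1U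
  have hFu1 : 1 < (1+u) * Real.log (1 + 1/u) := hFU1.trans hF
  have e1 : Real.log (1 + 1/u) / (Real.log (1 + 1/u) - 1/(1+u))
      = ((1+u) * Real.log (1 + 1/u)) / ((1+u) * Real.log (1 + 1/u) - 1) := by
    rw [div_eq_div_iff (ne_of_gt hgu) (ne_of_gt (by linarith : (0:ℝ) < (1+u) * Real.log (1 + 1/u) - 1))]
    field_simp
  have e2 : Real.log (1 + 1/U) / (Real.log (1 + 1/U) - 1/(1+U))
      = ((1+U) * Real.log (1 + 1/U)) / ((1+U) * Real.log (1 + 1/U) - 1) := by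
    rw [div_eq_div_iff (ne_of_gt hgU) (ne_of_gt (by linarith : (0:ℝ) < (1+U) * Real.log (1 + 1/U) - 1))]
    field_simp
  rw [e1, e2, div_le_div_iff₀ (by linarith) (by linarith)]
  nlinarith

theorem phiInv_ratio_bound (ψ : ℝ → ℝ)
    (hψ_pos : ∀ t ∈ Set.Ioo (0 : ℝ) 1, 0 < ψ t)
    (hψ_inv : ∀ t ∈ Set.Ioo (0 : ℝ) 1, phi (ψ t) = t) :
    BddAbove ((fun u : ℝ =>
        Real.log (1 + 1 / u) / (Real.log (1 + 1 / u) - 1 / (1 + u))) ''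
      Set.Ioo 0 (ψ (1 / 2))) ∧
    ∀ v y : ℝ, 1 < v → v < y / 2 → 1 < y →
      ψ (v / y) / ψ (1 / y) ≤
        v ^ sSup ((fun u : ℝ =>
            Real.log (1 + 1 / u) / (Real.log (1 + 1 / u) - 1 / (1 + u))) ''
          Set.Ioo 0 (ψ (1 / 2))) := by
  have hhalf : (1/2 : ℝ) ∈ Ioo (0:ℝ) 1 := by norm_num
  set U := ψ (1/2) with hUdef
  have hU0 : 0 < U := hψ_pos _ hhalf
  set S := (fun u : ℝ =>
      Real.log (1 + 1 / u) / (Real.log (1 + 1 / u) - 1 / (1 + u))) '' Ioo 0 U with hSdef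
  have hbdd : BddAbove S := by
    refine ⟨Real.log (1 + 1/U) / (Real.log (1 + 1/U) - 1/(1+U)), ?_⟩
    rintro x ⟨u, ⟨hu0, huU⟩, rfl⟩
    exact ratio_mono hu0 huU
  refine ⟨hbdd, ?_⟩
  intro v y hv hvy hy
  set c := sSup S with hcdef
  -- basic facts about ψ
  have hmono : StrictMonoOn ψ (Ioo 0 1) := by
    intro t1 h1 t2 h2 h12
    have := (phi_strictMonoOn.lt_iff_lt (mem_Ioi.2 (hψ_pos _ h1))
      (mem_Ioi.2 (hψ_pos _ h2)))
    rw [hψ_inv _ h1, hψ_inv _ h2] at this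
    exact this.1 h12
  have hleft : ∀ u : ℝ, 0 < u → ψ (phi u) = u := by
    intro u hu
    exact phi_strictMonoOn.injOn (mem_Ioi.2 (hψ_pos _ (phi_mem_Ioo hu)))
      (mem_Ioi.2 hu) (hψ_inv _ (phi_mem_Ioo hu))
  have himg : Ioi (0:ℝ) ⊆ ψ '' Ioo 0 1 := by
    intro u hu
    exact ⟨phi u, phi_mem_Ioo hu, hleft u hu⟩
  have hcont : ∀ t ∈ Ioo (0:ℝ) 1, ContinuousAt ψ t := fun t ht =>
    hmono.continuousAt_of_image_mem_nhds (isOpen_Ioo.mem_nhds ht)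
      (Filter.mem_of_superset (isOpen_Ioi.mem_nhds (hψ_pos t ht)) himg)
  have hderiv : ∀ t ∈ Ioo (0:ℝ) 1,
      HasDerivAt ψ (Real.log (1 + 1/(ψ t)) - 1/(1 + ψ t))⁻¹ t := by
    intro t ht
    exact HasDerivAt.of_local_left_inverse (hcont t ht)
      (phi_hasDerivAt (hψ_pos t ht)) (ne_of_gt (phi_deriv_pos (hψ_pos t ht)))
      ((isOpen_Ioo.eventually_mem ht).mono fun s hs => hψ_inv s hs)
  -- the auxiliary function H
  set H : ℝ → ℝ := fun t => c * Real.log t - Real.log (ψ t) with hHdef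
  have hy0 : (0:ℝ) < y := by linarith
  have hIcc : Icc (1/y) (v/y) ⊆ Ioo (0:ℝ) 1 := by
    intro t ⟨ht1, ht2⟩
    constructor
    · have : (0:ℝ) < 1/y := by positivity
      linarith
    · have : v/y < 1/2 := by rw [div_lt_iff₀ hy0]; linarith
      linarith
  have hIcc2 : ∀ t ∈ Icc (1/y) (v/y), t < 1/2 := by
    intro t ⟨_, ht2⟩
    have : v/y < 1/2 := by rw [div_lt_iff₀ hy0]; linarith
    linarith
  have hHderiv : ∀ t ∈ Ioo (0:ℝ) 1,
      HasDerivAt H (c * t⁻¹ - (ψ t)⁻¹ * (Real.log (1 + 1/(ψ t)) - 1/(1 + ψ t))⁻¹) t := by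
    intro t ht
    have h1 : HasDerivAt (fun t : ℝ => c * Real.log t) (c * t⁻¹) t :=
      (Real.hasDerivAt_log (ne_of_gt ht.1)).const_mul c
    have h2 : HasDerivAt (fun t : ℝ => Real.log (ψ t))
        ((ψ t)⁻¹ * (Real.log (1 + 1/(ψ t)) - 1/(1 + ψ t))⁻¹) t :=
      (Real.hasDerivAt_log (ne_of_gt (hψ_pos t ht))).comp t (hderiv t ht)
    exact h1.sub h2
  have hHmono : MonotoneOn H (Icc (1/y) (v/y)) := by
    apply monotoneOn_of_deriv_nonneg (convex_Icc _ _)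
    · exact fun t ht => ((hHderiv t (hIcc ht)).differentiableAt).continuousAt.continuousWithinAt
    · intro t ht
      exact ((hHderiv t (hIcc (interior_subset ht))).differentiableAt).differentiableWithinAt
    · intro t ht
      rw [interior_Icc] at ht
      have ht' : t ∈ Icc (1/y) (v/y) := ⟨le_of_lt ht.1, le_of_lt ht.2⟩
      have htI := hIcc ht'
      rw [(hHderiv t htI).deriv]
      have hψt : 0 < ψ t := hψ_pos t htI
      have hψtU : ψ t < U := hmono htI hhalf (hIcc2 t ht')
      have hc : Real.log (1 + 1/(ψ t)) / (Real.log (1 + 1/(ψ t)) - 1/(1 + ψ t)) ≤ c :=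
        le_csSup hbdd ⟨ψ t, ⟨hψt, hψtU⟩, rfl⟩
      have hg := phi_deriv_pos hψt
      have hf : 0 < Real.log (1 + 1/(ψ t)) := by
        have := inv_lt_log' hψt
        have h2 : (0:ℝ) < 1/(1 + ψ t) := by positivity
        linarith
      have htinv : t⁻¹ = (ψ t * Real.log (1 + 1/(ψ t)))⁻¹ := by
        conv_lhs => rw [← hψ_inv t htI]
        rfl
      have hc' : Real.log (1 + 1/(ψ t)) ≤ c * (Real.log (1 + 1/(ψ t)) - 1/(1 + ψ t)) :=
        (div_le_iff₀ hg).1 hc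
      rw [htinv]
      exact aux_ineq hψt hf hg hc'
  have h1v : (1:ℝ)/y ≤ v/y := (div_le_div_iff_of_pos_right hy0).2 (le_of_lt hv)
  have hm1 : (1/y : ℝ) ∈ Ioo (0:ℝ) 1 := hIcc ⟨le_refl _, h1v⟩
  have hm2 : (v/y : ℝ) ∈ Ioo (0:ℝ) 1 := hIcc ⟨h1v, le_refl _⟩
  have hp1 := hψ_pos _ hm1
  have hp2 := hψ_pos _ hm2
  have hlog : Real.log (ψ (v/y)) - Real.log (ψ (1/y)) ≤ c * Real.log v := by
    have h := hHmono ⟨le_refl _, h1v⟩ ⟨h1v, le_refl _⟩ h1v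
    have e : Real.log (v/y) - Real.log (1/y) = Real.log v := by
      rw [Real.log_div (by linarith) (by linarith),
        Real.log_div one_ne_zero (by linarith), Real.log_one]
      ring
    have e2 : c * Real.log (v/y) - c * Real.log (1/y) = c * Real.log v := by
      rw [← mul_sub, e]
    simp only [hHdef] at h
    linarith
  calc ψ (v/y) / ψ (1/y) = Real.exp (Real.log (ψ (v/y)) - Real.log (ψ (1/y))) := by
        rw [Real.exp_sub, Real.exp_log hp2, Real.exp_log hp1]
    _ ≤ Real.exp (c * Real.log v) := Real.exp_le_exp.2 hlog
    _ = v ^ c := by rw [Real.rpow_def_of_pos (by linarith), mul_comm]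
end

section
/- Under the gamma prior τ ~ Ga(a_τ, b_τ) with integrands f_i(β, τ, u_i) = (βτu_i)^{τu_i+1}·Γ(τu_i + δ_i + 1) / [(βτu_i + δ_i y_i)^{τu_i + δ_i + 1}·Γ(τu_i + 1)], the lower bound f_i(β, τ, u_i) ≥ exp(−δ_i y_i/β − 1/12 − δ_i)·βτu_i·(τu_i + δ_i + 1)^{δ_i}/(βτu_i + δ_i y_i)^{δ_i+1} holds for all β, τ, u_i > 0. -/
open Real

-- Wendel-type inequality from log-convexity
lemma wendel {a s : ℝ} (ha : 0 < a) (hs0 : 0 ≤ s) (hs1 : s ≤ 1) :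
    Real.Gamma (a + s) ≤ Real.Gamma a * a ^ s := by
  have hΓa : 0 < Real.Gamma a := Real.Gamma_pos_of_pos ha
  have has : 0 < a + s := by linarith
  have hΓas : 0 < Real.Gamma (a + s) := Real.Gamma_pos_of_pos has
  have hc := Real.convexOn_log_Gamma.2 (Set.mem_Ioi.2 ha)
    (Set.mem_Ioi.2 (by linarith : (0:ℝ) < a + 1)) (by linarith : (0:ℝ) ≤ 1 - s) hs0
    (by ring)
  have hpt : (1 - s) • a + s • (a + 1) = a + s := by simp [smul_eq_mul]; ring
  rw [hpt] at hc
  simp only [Function.comp, smul_eq_mul] at hc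
  have h1 : Real.log (Real.Gamma (a + 1)) = Real.log a + Real.log (Real.Gamma a) := by
    rw [Real.Gamma_add_one ha.ne', Real.log_mul ha.ne' hΓa.ne']
  have h2 : Real.log (Real.Gamma (a + s)) ≤ Real.log (Real.Gamma a) + s * Real.log a := by
    rw [h1] at hc; nlinarith [hc]
  calc Real.Gamma (a + s) = Real.exp (Real.log (Real.Gamma (a + s))) := (Real.exp_log hΓas).symm
    _ ≤ Real.exp (Real.log (Real.Gamma a) + s * Real.log a) := Real.exp_le_exp.2 h2
    _ = Real.Gamma a * a ^ s := by
        rw [Real.exp_add, Real.exp_log hΓa, Real.rpow_def_of_pos ha, mul_comm s]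

lemma gamma_shift (x : ℝ) (hx : 0 < x) (n : ℕ) :
    Real.Gamma (x + n) = Real.Gamma x * ∏ k ∈ Finset.range n, (x + k) := by
  induction n with
  | zero => simp
  | succ n ih =>
    have hxn : (x + (n + 1 : ℕ) : ℝ) = (x + n) + 1 := by push_cast; ring
    rw [hxn, Real.Gamma_add_one (by positivity), ih, Finset.prod_range_succ]
    ring

-- numeric: exp (11/6) ≤ 2 * π
lemma exp_numeric : Real.exp (11/6) ≤ 2 * Real.pi := by
  have h1 : Real.exp (11/6) ^ 6 = Real.exp 11 := by
    rw [← Real.exp_nat_mul]; norm_num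
  have h2 : Real.exp 11 = Real.exp 1 ^ 11 := by
    rw [← Real.exp_nat_mul]; norm_num
  have h3 : Real.exp 1 ^ 11 < 2.7182818286 ^ 11 := by
    apply pow_lt_pow_left₀ Real.exp_one_lt_d9 (Real.exp_pos 1).le
    norm_num
  have h4 : (2.7182818286 : ℝ) ^ 11 ≤ 6.26 ^ 6 := by norm_num
  have h5 : Real.exp (11/6) ≤ 6.26 := by
    apply le_of_pow_le_pow_left₀ (n := 6) (by norm_num) (by norm_num)
    rw [h1, h2]
    linarith
  have h6 : (6.26 : ℝ) ≤ 2 * Real.pi := by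
    have := Real.pi_gt_d6
    linarith
  linarith

lemma factorial_lb (n : ℕ) (hn : 1 ≤ n) :
    ((n : ℝ) / Real.exp 1) ^ n * Real.exp (11/12) ≤ (n.factorial : ℝ) := by
  obtain ⟨m, rfl⟩ := Nat.exists_eq_add_of_le hn
  set n := 1 + m with hn'
  have hnp : (0:ℝ) < n := by positivity
  -- stirlingSeq lower bound
  have hanti : Antitone fun k => Stirling.stirlingSeq (k + 1) := by
    intro i j hij
    have := Stirling.log_stirlingSeq'_antitone hij
    simp only [Function.comp] at this
    have hi := Stirling.stirlingSeq'_pos i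
    have hj := Stirling.stirlingSeq'_pos j
    exact (Real.log_le_log_iff hj hi).1 this
  have htend : Filter.Tendsto (fun k => Stirling.stirlingSeq (k + 1)) Filter.atTop
      (nhds (Real.sqrt Real.pi)) :=
    Stirling.tendsto_stirlingSeq_sqrt_pi.comp (Filter.tendsto_add_atTop_nat 1)
  have hlb : Real.sqrt Real.pi ≤ Stirling.stirlingSeq n := by
    have := hanti.le_of_tendsto htend m
    simpa [hn', Nat.add_comm] using this
  rw [Stirling.stirlingSeq] at hlb
  have hden : 0 < Real.sqrt (2 * n) * ((n : ℝ) / Real.exp 1) ^ n := by positivity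
  rw [le_div_iff₀ hden] at hlb
  have key : Real.exp (11/12) ≤ Real.sqrt Real.pi * Real.sqrt (2 * n) := by
    rw [← Real.sqrt_mul Real.pi_pos.le]
    rw [show Real.exp (11/12) = Real.sqrt (Real.exp (11/6)) by
      rw [show (11:ℝ)/6 = 11/12 + 11/12 by norm_num, Real.exp_add,
        Real.sqrt_mul_self (Real.exp_pos _).le]]
    apply Real.sqrt_le_sqrt
    calc Real.exp (11/6) ≤ 2 * Real.pi := exp_numeric
      _ ≤ Real.pi * (2 * n) := by nlinarith [Real.pi_pos, (by exact_mod_cast hn : (1:ℝ) ≤ n)]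
  calc ((n : ℝ) / Real.exp 1) ^ n * Real.exp (11/12)
      ≤ ((n : ℝ) / Real.exp 1) ^ n * (Real.sqrt Real.pi * Real.sqrt (2 * n)) := by
        apply mul_le_mul_of_nonneg_left key (by positivity)
    _ ≤ (n.factorial : ℝ) := by nlinarith [hlb]


lemma gammaA {x δ : ℝ} (hx : 0 < x) (hδ : 0 < δ) :
    Real.exp (-(1/12) - δ) * (x + δ + 1) ^ δ * Real.Gamma (x + 1) ≤ Real.Gamma (x + δ + 1) := by
  set n := ⌈δ⌉₊ with hndef
  have hn1 : 1 ≤ n := Nat.one_le_iff_ne_zero.2 (Nat.ceil_pos.2 hδ).ne'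
  have hn1R : (1:ℝ) ≤ (n:ℝ) := by exact_mod_cast hn1
  have hδn : δ ≤ (n : ℝ) := Nat.le_ceil δ
  have hnδ : (n : ℝ) < δ + 1 := Nat.ceil_lt_add_one hδ.le
  set S := x + δ + 1 with hSdef
  have hSpos : 0 < S := by rw [hSdef]; linarith
  have hΓx1 : 0 < Real.Gamma (x + 1) := Real.Gamma_pos_of_pos (by linarith)
  -- Wendel step
  have hW : Real.Gamma (x + 1 + n) ≤ Real.Gamma S * S ^ ((n : ℝ) - δ) := by
    have h := wendel hSpos (sub_nonneg.2 hδn) (by linarith)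
    rwa [show S + ((n:ℝ) - δ) = x + 1 + n by rw [hSdef]; ring] at h
  have hP : Real.Gamma (x + 1 + n) = Real.Gamma (x+1) * ∏ k ∈ Finset.range n, (x + 1 + k) :=
    gamma_shift (x+1) (by linarith) n
  set P := ∏ k ∈ Finset.range n, (x + 1 + (k:ℝ)) with hPdef
  have hPpos : 0 < P := Finset.prod_pos fun k _ => by positivity
  have hfact : ∏ k ∈ Finset.range n, ((k:ℝ) + 1) = (n.factorial : ℝ) := by
    calc ∏ k ∈ Finset.range n, ((k:ℝ) + 1)
        = ((∏ k ∈ Finset.range n, (k + 1) : ℕ) : ℝ) := by push_cast; rfl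
      _ = (n.factorial : ℝ) := by rw [Finset.prod_range_add_one_eq_factorial]
  have hfactpos : (0:ℝ) < n.factorial := by exact_mod_cast n.factorial_pos
  -- product bound
  have hprod : S ^ n * (n.factorial : ℝ) ≤ (δ + 1) ^ n * P := by
    calc S ^ n * (n.factorial : ℝ) = ∏ k ∈ Finset.range n, (S * ((k:ℝ) + 1)) := by
          rw [Finset.prod_mul_distrib, Finset.prod_const, Finset.card_range, hfact]
      _ ≤ ∏ k ∈ Finset.range n, ((δ + 1) * (x + 1 + (k:ℝ))) := by
          apply Finset.prod_le_prod
          · intro k _; positivity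
          · intro k hk
            have hk' : (k:ℝ) + 1 ≤ (n:ℝ) := by
              exact_mod_cast Nat.succ_le_of_lt (Finset.mem_range.1 hk)
            have hkδ : (k:ℝ) ≤ δ := by linarith
            rw [hSdef]; nlinarith [hx, hkδ, (Nat.cast_nonneg k : (0:ℝ) ≤ k)]
      _ = (δ + 1) ^ n * P := by
          rw [Finset.prod_mul_distrib, Finset.prod_const, Finset.card_range]
  -- numeric bound
  have hnum : (δ + 1) ^ n ≤ (n.factorial : ℝ) * Real.exp (δ + 1/12) := by
    have hnR : (0:ℝ) < n := by linarith
    have step1 : δ + 1 ≤ (n:ℝ) * Real.exp ((δ + 1 - n)/n) := by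
      have h := Real.add_one_le_exp ((δ + 1 - n)/n)
      have : (δ + 1)/(n:ℝ) ≤ Real.exp ((δ + 1 - n)/n) := by
        have : (δ + 1)/(n:ℝ) = (δ + 1 - n)/n + 1 := by field_simp; ring
        rw [this]; exact h
      calc δ + 1 = (n:ℝ) * ((δ + 1)/(n:ℝ)) := by field_simp
        _ ≤ (n:ℝ) * Real.exp ((δ + 1 - n)/n) := by
            apply mul_le_mul_of_nonneg_left this hnR.le
    have step2 : (δ + 1) ^ n ≤ (n:ℝ) ^ n * Real.exp (δ + 1 - n) := by
      calc (δ + 1) ^ n ≤ ((n:ℝ) * Real.exp ((δ + 1 - n)/n)) ^ n := by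
            apply pow_le_pow_left₀ (by linarith) step1
        _ = (n:ℝ) ^ n * Real.exp (δ + 1 - n) := by
            rw [mul_pow, ← Real.exp_nat_mul]
            congr 2
            field_simp
    have step3 : (n:ℝ) ^ n = ((n:ℝ)/Real.exp 1) ^ n * Real.exp n := by
      rw [div_pow, ← Real.exp_nat_mul, mul_one, div_mul_cancel₀]
      positivity
    have step4 := factorial_lb n hn1
    calc (δ + 1) ^ n ≤ (n:ℝ) ^ n * Real.exp (δ + 1 - n) := step2
      _ = (((n:ℝ)/Real.exp 1) ^ n * Real.exp (11/12)) * Real.exp (δ + 1/12) := by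
          rw [step3, mul_assoc, mul_assoc, ← Real.exp_add, ← Real.exp_add]
          congr 1
          ring
      _ ≤ (n.factorial : ℝ) * Real.exp (δ + 1/12) := by
          apply mul_le_mul_of_nonneg_right step4 (Real.exp_pos _).le
  -- hence S^n ≤ exp(δ+1/12) * P
  have hSn : S ^ n ≤ Real.exp (δ + 1/12) * P := by
    have h1 : S ^ n * (n.factorial : ℝ) ≤ ((n.factorial : ℝ) * Real.exp (δ + 1/12)) * P := by
      calc S ^ n * (n.factorial : ℝ) ≤ (δ + 1) ^ n * P := hprod
        _ ≤ ((n.factorial : ℝ) * Real.exp (δ + 1/12)) * P :=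
            mul_le_mul_of_nonneg_right hnum hPpos.le
    have := (mul_le_mul_iff_of_pos_right hfactpos).1 (by linarith [h1] : S ^ n * (n.factorial : ℝ) ≤
      (Real.exp (δ + 1/12) * P) * (n.factorial : ℝ))
    exact this
  -- final assembly in rpow land
  have hex : Real.exp (-(1/12) - δ) * S ^ δ ≤ P * S ^ (δ - (n:ℝ)) := by
    have hsplit : S ^ δ = S ^ ((n:ℝ)) * S ^ (δ - (n:ℝ)) := by
      rw [← Real.rpow_add hSpos]; ring_nf
    have hSnn : S ^ ((n:ℝ)) = S ^ n := Real.rpow_natCast S n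
    rw [hsplit, hSnn]
    calc Real.exp (-(1/12) - δ) * (S ^ n * S ^ (δ - (n:ℝ)))
        ≤ Real.exp (-(1/12) - δ) * ((Real.exp (δ + 1/12) * P) * S ^ (δ - (n:ℝ))) := by
          apply mul_le_mul_of_nonneg_left _ (Real.exp_pos _).le
          exact mul_le_mul_of_nonneg_right hSn (Real.rpow_nonneg hSpos.le _)
      _ = (Real.exp (-(1/12) - δ) * Real.exp (δ + 1/12)) * P * S ^ (δ - (n:ℝ)) := by ring
      _ = P * S ^ (δ - (n:ℝ)) := by
          rw [← Real.exp_add, show -(1/12) - δ + (δ + 1/12) = 0 by ring, Real.exp_zero, one_mul]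
  calc Real.exp (-(1/12) - δ) * S ^ δ * Real.Gamma (x + 1)
      ≤ (P * S ^ (δ - (n:ℝ))) * Real.Gamma (x + 1) :=
        mul_le_mul_of_nonneg_right hex hΓx1.le
    _ = (Real.Gamma (x+1) * P) * S ^ (δ - (n:ℝ)) := by ring
    _ = Real.Gamma (x + 1 + n) * S ^ (δ - (n:ℝ)) := by rw [hP]
    _ ≤ (Real.Gamma S * S ^ ((n:ℝ) - δ)) * S ^ (δ - (n:ℝ)) :=
        mul_le_mul_of_nonneg_right hW (Real.rpow_nonneg hSpos.le _)
    _ = Real.Gamma S * (S ^ ((n:ℝ) - δ) * S ^ (δ - (n:ℝ))) := by ring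
    _ = Real.Gamma S := by
        rw [← Real.rpow_add hSpos, show (n:ℝ) - δ + (δ - (n:ℝ)) = 0 by ring,
          Real.rpow_zero, mul_one]

theorem f_lower_bound (δ y β τ u : ℝ) (hδ : 0 < δ) (hy : 0 < y) (hβ : 0 < β)
    (hτ : 0 < τ) (hu : 0 < u) :
    Real.exp (-(δ * y / β) - 1 / 12 - δ) *
        (β * τ * u * (τ * u + δ + 1) ^ δ / (β * τ * u + δ * y) ^ (δ + 1))
      ≤ (β * τ * u) ^ (τ * u + 1) * Real.Gamma (τ * u + δ + 1) /
          ((β * τ * u + δ * y) ^ (τ * u + δ + 1) * Real.Gamma (τ * u + 1)) := by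
  have hx : 0 < τ * u := by positivity
  have hB : 0 < β * τ * u := by positivity
  have hT : 0 < β * τ * u + δ * y := by positivity
  set x := τ * u with hxdef
  set B := β * τ * u with hBdef
  set T := B + δ * y with hTdef
  set S := x + δ + 1 with hSdef
  have hSpos : 0 < S := by rw [hSdef]; linarith
  have hΓ2 : 0 < Real.Gamma (x + 1) := Real.Gamma_pos_of_pos (by linarith)
  have hΓ1 : 0 < Real.Gamma (x + δ + 1) := Real.Gamma_pos_of_pos (by linarith)
  -- Sub1 : T ^ x ≤ exp (δ*y/β) * B ^ x
  have sub1 : T ^ x ≤ Real.exp (δ * y / β) * B ^ x := by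
    have hTB : T = B * (1 + δ * y / B) := by field_simp; exact hTdef
    have h1p : 0 < 1 + δ * y / B := by positivity
    have hlog : Real.log (1 + δ * y / B) ≤ δ * y / B := by
      have := Real.log_le_sub_one_of_pos h1p
      linarith
    have hxval : (δ * y / B) * x = δ * y / β := by
      rw [hBdef, hxdef]; field_simp
    calc T ^ x = B ^ x * (1 + δ * y / B) ^ x := by
          rw [hTB, Real.mul_rpow hB.le h1p.le]
      _ = B ^ x * Real.exp (Real.log (1 + δ * y / B) * x) := by
          rw [Real.rpow_def_of_pos h1p]
      _ ≤ B ^ x * Real.exp ((δ * y / B) * x) := by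
          apply mul_le_mul_of_nonneg_left _ (Real.rpow_nonneg hB.le x)
          exact Real.exp_le_exp.2 (mul_le_mul_of_nonneg_right hlog hx.le)
      _ = Real.exp (δ * y / β) * B ^ x := by rw [hxval]; ring
  -- Sub2
  have sub2 : Real.exp (-(1/12) - δ) * S ^ δ * Real.Gamma (x + 1) ≤ Real.Gamma (x + δ + 1) :=
    gammaA hx hδ
  -- key combined inequality
  have key : (Real.exp (-(δ * y / β)) * T ^ x) * (Real.exp (-(1/12) - δ) * S ^ δ *
      Real.Gamma (x + 1)) ≤ B ^ x * Real.Gamma (x + δ + 1) := by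
    have h1 : Real.exp (-(δ * y / β)) * T ^ x ≤ B ^ x := by
      calc Real.exp (-(δ * y / β)) * T ^ x
          ≤ Real.exp (-(δ * y / β)) * (Real.exp (δ * y / β) * B ^ x) :=
            mul_le_mul_of_nonneg_left sub1 (Real.exp_pos _).le
        _ = B ^ x := by
            rw [← mul_assoc, ← Real.exp_add, neg_add_cancel, Real.exp_zero, one_mul]
    apply mul_le_mul h1 sub2 (by positivity) (Real.rpow_nonneg hB.le x)
  -- assembly
  rw [show Real.exp (-(δ * y / β) - 1 / 12 - δ) * (B * S ^ δ / T ^ (δ + 1))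
      = (Real.exp (-(δ * y / β) - 1 / 12 - δ) * (B * S ^ δ)) / T ^ (δ + 1) by ring,
    div_le_div_iff₀ (by positivity) (by positivity)]
  have hTsplit : T ^ (x + δ + 1) = T ^ x * T ^ (δ + 1) := by
    rw [← Real.rpow_add hT]; ring_nf
  have hBsplit : B ^ (x + 1) = B ^ x * B := by
    rw [Real.rpow_add hB x 1, Real.rpow_one]
  have hexp : Real.exp (-(δ * y / β) - 1 / 12 - δ)
      = Real.exp (-(δ * y / β)) * Real.exp (-(1/12) - δ) := by
    rw [← Real.exp_add]; ring_nf
  calc Real.exp (-(δ * y / β) - 1 / 12 - δ) * (B * S ^ δ) * (T ^ (x + δ + 1) *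
        Real.Gamma (x + 1))
      = ((Real.exp (-(δ * y / β)) * T ^ x) * (Real.exp (-(1/12) - δ) * S ^ δ *
          Real.Gamma (x + 1))) * (B * T ^ (δ + 1)) := by
        rw [hexp, hTsplit]; ring
    _ ≤ (B ^ x * Real.Gamma (x + δ + 1)) * (B * T ^ (δ + 1)) := by
        apply mul_le_mul_of_nonneg_right key (by positivity)
    _ = B ^ (x + 1) * Real.Gamma (x + δ + 1) * T ^ (δ + 1) := by
        rw [hBsplit]; ring
end
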